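/- Let (X,d,μ) be a metric measure space with a doubling measure μ and let 0 < p < ∞. Then there is a constant C ≥ 1, depending only on p and the doubling constant of μ, such that for every f ∈ L^p(X) + M^{1,p}(X) and every t > 0: C^{-1} ( K(f,t; L^p(X), Ṁ^{1,p}(X)) + min{1,t} ‖f‖_{L^p(X)} ) ≤ K(f,t; L^p(X), M^{1,p}(X)) ≤ C ( K(f,t; L^p(X), Ṁ^{1,p}(X)) + min{1,t} ‖f‖_{L^p(X)} ). -/

import Mathlib

open MeasureTheory Metric Set
open scoped ENNReal NNReal
noncomputable section

variable {X : Type*} [MetricSpace X] [MeasurableSpace X]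

/-- `l^q` norm (`0<q≤∞`, with `q = ⊤` the sup) of a `ℤ`-indexed sequence in `ℝ≥0∞`. -/
def lqNorm (q : ℝ≥0∞) (a : ℤ → ℝ≥0∞) : ℝ≥0∞ :=
  if q = ⊤ then ⨆ k, a k else (∑' k, a k ^ q.toReal) ^ (1 / q.toReal)

/-- `L^p` "norm" (`0<p<∞`) of an `ℝ≥0∞`-valued function. -/
def LpE {X : Type*} [MeasurableSpace X] (μ : Measure X) (p : ℝ) (f : X → ℝ≥0∞) : ℝ≥0∞ :=
  (∫⁻ x, f x ^ p ∂μ) ^ (1 / p)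

/-- `L^p` norm of a real-valued function on the set `S`. -/
def LpS {X : Type*} [MeasurableSpace X] (μ : Measure X) (p : ℝ) (S : Set X) (u : X → ℝ) : ℝ≥0∞ :=
  LpE (μ.restrict S) p fun x => ENNReal.ofReal |u x|

/-- `(g k)_{k ∈ ℤ}` is a fractional `s`-gradient of `u` on `S`. -/
def IsFracGrad (μ : Measure X) (s : ℝ) (S : Set X) (u : X → ℝ) (g : ℤ → X → ℝ) : Prop :=
  (∀ k x, 0 ≤ g k x) ∧ (∀ k, Measurable (g k)) ∧
    ∃ E : Set X, E ⊆ S ∧ μ E = 0 ∧ ∀ (k : ℤ), ∀ x ∈ S \ E, ∀ y ∈ S \ E,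
      (2 : ℝ) ^ (-(k : ℝ) - 1) ≤ dist x y → dist x y < (2 : ℝ) ^ (-(k : ℝ)) →
        |u x - u y| ≤ dist x y ^ s * (g k x + g k y)

/-- The norm `‖(g k)‖_{L^p(S, l^q)}`. -/
def tlGradNorm (μ : Measure X) (p : ℝ) (q : ℝ≥0∞) (S : Set X) (g : ℤ → X → ℝ) : ℝ≥0∞ :=
  LpE (μ.restrict S) p fun x => lqNorm q fun k => ENNReal.ofReal (g k x)

/-- The norm `‖(g k)‖_{l^q(L^p(S))}`. -/
def besovGradNorm (μ : Measure X) (p : ℝ) (q : ℝ≥0∞) (S : Set X) (g : ℤ → X → ℝ) : ℝ≥0∞ :=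
  lqNorm q fun k => LpS μ p S (g k)

/-- The Hajłasz–Triebel–Lizorkin norm `‖u‖_{M^s_{p,q}(S)}`. -/
def TLNorm (μ : Measure X) (s p : ℝ) (q : ℝ≥0∞) (S : Set X) (u : X → ℝ) : ℝ≥0∞ :=
  LpS μ p S u + ⨅ (g : ℤ → X → ℝ) (_ : IsFracGrad μ s S u g), tlGradNorm μ p q S g

/-- The Hajłasz–Besov norm `‖u‖_{N^s_{p,q}(S)}`. -/
def BesovNorm (μ : Measure X) (s p : ℝ) (q : ℝ≥0∞) (S : Set X) (u : X → ℝ) : ℝ≥0∞ :=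
  LpS μ p S u + ⨅ (g : ℤ → X → ℝ) (_ : IsFracGrad μ s S u g), besovGradNorm μ p q S g

/-- `μ` is doubling with constant `cD`. -/
def IsDoubling (μ : Measure X) (cD : ℝ≥0∞) : Prop :=
  ∀ (x : X) (r : ℝ), 0 < r → μ (ball x (2 * r)) ≤ cD * μ (ball x r)

/-- Every ball has positive and finite measure. -/
def BallsPosFin (μ : Measure X) : Prop :=
  ∀ (x : X) (r : ℝ), 0 < r → 0 < μ (ball x r) ∧ μ (ball x r) < ⊤

/-- The measure density condition for `S` with constant `cm`. -/
def MeasureDensity (μ : Measure X) (S : Set X) (cm : ℝ) : Prop :=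
  ∀ x ∈ S, ∀ r : ℝ, 0 < r → r ≤ 1 → ENNReal.ofReal cm * μ (ball x r) ≤ μ (S ∩ ball x r)

/-- `X` is `Q`-regular with constant `cQ`. -/
def QRegular (μ : Measure X) (Q cQ : ℝ) : Prop :=
  1 ≤ cQ ∧ ∀ (x : X) (r : ℝ), 0 < r → ENNReal.ofReal r ≤ EMetric.diam (univ : Set X) →
    ENNReal.ofReal (cQ⁻¹ * r ^ Q) ≤ μ (ball x r) ∧ μ (ball x r) ≤ ENNReal.ofReal (cQ * r ^ Q)

/-- `X` is geodesic: any two points are joined by an isometric curve. -/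
def GeodesicSpace (X : Type*) [MetricSpace X] : Prop :=
  ∀ x y : X, ∃ γ : ℝ → X, γ 0 = x ∧ γ (dist x y) = y ∧
    ∀ a ∈ Icc (0 : ℝ) (dist x y), ∀ b ∈ Icc (0 : ℝ) (dist x y), dist (γ a) (γ b) = |a - b|


variable {X : Type*} [MetricSpace X] [MeasurableSpace X]

/-- `g` is a (Hajłasz) `1`-gradient of `u`. -/
def IsOneGrad (μ : Measure X) (u g : X → ℝ) : Prop :=
  (∀ x, 0 ≤ g x) ∧ Measurable g ∧
    ∃ E : Set X, μ E = 0 ∧ ∀ x ∉ E, ∀ y ∉ E, |u x - u y| ≤ dist x y * (g x + g y)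

/-- The homogeneous Hajłasz seminorm `‖u‖_{Ṁ^{1,p}(X)}`. -/
def hajlaszSemi (μ : Measure X) (p : ℝ) (u : X → ℝ) : ℝ≥0∞ :=
  ⨅ (g : X → ℝ) (_ : IsOneGrad μ u g), LpS μ p Set.univ g

/-- The `K`-functional for the couple `(L^p(X), Ṁ^{1,p}(X))`. -/
def Khom (μ : Measure X) (p : ℝ) (f : X → ℝ) (t : ℝ) : ℝ≥0∞ :=
  ⨅ (g : X → ℝ) (h : X → ℝ) (_ : f = g + h) (_ : Measurable g) (_ : Measurable h),
    LpS μ p Set.univ g + ENNReal.ofReal t * hajlaszSemi μ p h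

/-- `E_p(f,t) = (∫_X ⨍_{B(x,t)} |f(x)-f(y)|^p dμ(y) dμ(x))^{1/p}`. -/
def Ep (μ : Measure X) (p : ℝ) (f : X → ℝ) (t : ℝ) : ℝ≥0∞ :=
  (∫⁻ x, (μ (ball x t))⁻¹ * ∫⁻ y in ball x t, ENNReal.ofReal |f x - f y| ^ p ∂μ ∂μ) ^ (1/p)

/-- The homogeneous Hajłasz–Besov seminorm `‖u‖_{Ṅ^s_{p,q}(X)}`. -/
def besovSemi (μ : Measure X) (s p : ℝ) (q : ℝ≥0∞) (u : X → ℝ) : ℝ≥0∞ :=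
  ⨅ (g : ℤ → X → ℝ) (_ : IsFracGrad μ s Set.univ u g), besovGradNorm μ p q Set.univ g

/-- The real interpolation norm `‖·‖_{(A₀,A₁)_{θ,q}}` built from a `K`-functional. -/
def interpNormK (K : ℝ → ℝ≥0∞) (θ : ℝ) (q : ℝ≥0∞) : ℝ≥0∞ :=
  if q = ⊤ then ⨆ t : {t : ℝ // 0 < t}, ENNReal.ofReal ((t : ℝ) ^ (-θ)) * K t
  else (∫⁻ t in Set.Ioi (0:ℝ),
    (ENNReal.ofReal (t ^ (-θ)) * K t) ^ q.toReal * ENNReal.ofReal t⁻¹) ^ (1 / q.toReal)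

/-- The `K`-functional for the couple `(L^p(X), M^{1,p}(X))`. -/
def Kinhom (μ : Measure X) (p : ℝ) (f : X → ℝ) (t : ℝ) : ℝ≥0∞ :=
  ⨅ (g : X → ℝ) (h : X → ℝ) (_ : f = g + h) (_ : Measurable g) (_ : Measurable h),
    LpS μ p Set.univ g + ENNReal.ofReal t * (LpS μ p Set.univ h + hajlaszSemi μ p h)

/-! Both `K`-functionals are infima over decompositions `f = g + h` with `g ∈ L^p`. Since
`‖·‖_{M^{1,p}} ≥ ‖·‖_{Ṁ^{1,p}}`, the homogeneous functional is the smaller one, and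
`min{1,t} ‖f‖_p ≤ c (‖g‖_p + t ‖h‖_p)` by the quasi-triangle inequality of `L^p`, with
`c = ENNReal.LpAddConst p`. Conversely, for `t ≤ 1` the missing term `t ‖h‖_p` of the
inhomogeneous functional is controlled by `t ‖h‖_p = t ‖f - g‖_p ≤ c t (‖f‖_p + ‖g‖_p)`, while
for `t ≥ 1` the trivial decomposition `f = f + 0` gives `K(f,t; L^p, M^{1,p}) ≤ ‖f‖_p`. -/

theorem ENNReal.LpAddConst_ne_zero (p : ℝ≥0∞) : ENNReal.LpAddConst p ≠ 0 := by
  rw [ENNReal.LpAddConst]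
  split_ifs <;> simp

theorem le_mul_iInf_decomp_add {α : Type*} [MeasurableSpace α] {f : α → ℝ} {a b c : ℝ≥0∞}
    (hc0 : c ≠ 0) (hc : c ≠ ⊤) (Φ : (α → ℝ) → (α → ℝ) → ℝ≥0∞)
    (hΦ : ∀ g h, f = g + h → Measurable g → Measurable h → a ≤ c * (Φ g h + b)) :
    a ≤ c * ((⨅ (g : α → ℝ) (h : α → ℝ) (_ : f = g + h) (_ : Measurable g)
      (_ : Measurable h), Φ g h) + b) := by
  rw [mul_comm, ← ENNReal.div_le_iff hc0 hc]
  simp only [ENNReal.iInf_add, le_iInf_iff]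
  intro g h hf hg hh
  rw [ENNReal.div_le_iff hc0 hc, mul_comm]
  exact hΦ g h hf hg hh

section LpS

variable {α : Type*} [MeasurableSpace α] {μ : Measure α} {p : ℝ}

theorem LpS_univ_eq_eLpNorm (hp : 0 < p) (u : α → ℝ) :
    LpS μ p univ u = eLpNorm u (ENNReal.ofReal p) μ := by
  rw [eLpNorm_eq_eLpNorm' (by simpa using hp) ENNReal.ofReal_ne_top,
    ENNReal.toReal_ofReal hp.le, eLpNorm', LpS, LpE, Measure.restrict_univ]
  simp only [Real.enorm_eq_ofReal_abs]

theorem LpS_univ_add_le (hp : 0 < p) {u v : α → ℝ} (hu : Measurable u) (hv : Measurable v) :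
    LpS μ p univ (u + v) ≤
      ENNReal.LpAddConst (ENNReal.ofReal p) * (LpS μ p univ u + LpS μ p univ v) := by
  simp only [LpS_univ_eq_eLpNorm hp]
  exact eLpNorm_add_le' hu.aestronglyMeasurable hv.aestronglyMeasurable _

theorem LpS_univ_sub_le (hp : 0 < p) {u v : α → ℝ} (hu : Measurable u) (hv : Measurable v) :
    LpS μ p univ (u - v) ≤
      ENNReal.LpAddConst (ENNReal.ofReal p) * (LpS μ p univ u + LpS μ p univ v) := by
  simpa only [sub_eq_add_neg, LpS_univ_eq_eLpNorm hp, eLpNorm_neg] using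
    LpS_univ_add_le (μ := μ) hp hu hv.neg

end LpS

section Kfunctional

variable {μ : Measure X} {p t : ℝ} {f : X → ℝ}

theorem hajlaszSemi_zero (hp : 0 < p) : hajlaszSemi μ p 0 = 0 := by
  have hzero : IsOneGrad μ 0 0 :=
    ⟨fun _ => le_rfl, measurable_const, ∅, measure_empty, fun x _ y _ => by simp⟩
  refine le_antisymm ?_ zero_le
  calc hajlaszSemi μ p 0 ≤ LpS μ p univ 0 := iInf₂_le _ hzero
    _ = 0 := by rw [LpS_univ_eq_eLpNorm hp, eLpNorm_zero]

theorem Khom_le_Kinhom : Khom μ p f t ≤ Kinhom μ p f t :=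
  iInf_mono fun g => iInf_mono fun h => iInf_mono fun _ => iInf_mono fun _ =>
    iInf_mono fun _ => by gcongr; exact le_add_self

theorem Kinhom_le_LpS (hp : 0 < p) (hf : Measurable f) : Kinhom μ p f t ≤ LpS μ p univ f := by
  calc Kinhom μ p f t
        ≤ LpS μ p univ f + ENNReal.ofReal t * (LpS μ p univ 0 + hajlaszSemi μ p 0) :=
        iInf_le_of_le f <| iInf_le_of_le 0 <| iInf_le_of_le (add_zero f).symm <|
          iInf_le_of_le hf <| iInf_le_of_le measurable_const le_rfl
    _ = LpS μ p univ f := by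
        rw [LpS_univ_eq_eLpNorm hp 0, eLpNorm_zero, hajlaszSemi_zero hp, add_zero, mul_zero,
          add_zero]

theorem min_one_mul_LpS_le_Kinhom (hp : 0 < p) :
    ENNReal.ofReal (min 1 t) * LpS μ p univ f ≤
      ENNReal.LpAddConst (ENNReal.ofReal p) * Kinhom μ p f t := by
  set c := ENNReal.LpAddConst (ENNReal.ofReal p)
  set m := ENNReal.ofReal (min 1 t)
  set T := ENNReal.ofReal t
  have hm1 : m ≤ 1 := ENNReal.ofReal_le_one.mpr (min_le_left _ _)
  have hmT : m ≤ T := ENNReal.ofReal_le_ofReal (min_le_right _ _)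
  rw [← add_zero (Kinhom μ p f t)]
  refine le_mul_iInf_decomp_add (ENNReal.LpAddConst_ne_zero _) (ENNReal.LpAddConst_lt_top _).ne _
    fun g h hfgh hg hh => ?_
  subst hfgh
  calc m * LpS μ p univ (g + h) ≤ m * (c * (LpS μ p univ g + LpS μ p univ h)) := by
        gcongr; exact LpS_univ_add_le hp hg hh
    _ = c * (m * LpS μ p univ g + m * LpS μ p univ h) := by ring
    _ ≤ c * (LpS μ p univ g + T * (LpS μ p univ h + hajlaszSemi μ p h)) := by
        gcongr
        · exact mul_le_of_le_one_left zero_le hm1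
        · exact le_self_add
    _ = _ := by rw [add_zero]

theorem Kinhom_le_of_le_one (hp : 0 < p) (hf : Measurable f) (ht : t ≤ 1) :
    Kinhom μ p f t ≤ (1 + ENNReal.LpAddConst (ENNReal.ofReal p)) *
      (Khom μ p f t + ENNReal.ofReal t * LpS μ p univ f) := by
  set c := ENNReal.LpAddConst (ENNReal.ofReal p)
  set T := ENNReal.ofReal t
  have hT1 : T ≤ 1 := ENNReal.ofReal_le_one.mpr ht
  refine le_mul_iInf_decomp_add (by simp) (by simpa using (ENNReal.LpAddConst_lt_top _).ne) _
    fun g h hfgh hg hh => ?_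
  have hH : LpS μ p univ h ≤ c * (LpS μ p univ f + LpS μ p univ g) := by
    rw [show h = f - g by rw [hfgh]; ring]
    exact LpS_univ_sub_le hp hf hg
  set F := LpS μ p univ f
  set G := LpS μ p univ g
  set H := LpS μ p univ h
  set S := hajlaszSemi μ p h
  calc Kinhom μ p f t ≤ G + T * (H + S) :=
        iInf_le_of_le g <| iInf_le_of_le h <| iInf_le_of_le hfgh <|
          iInf_le_of_le hg <| iInf_le_of_le hh le_rfl
    _ ≤ G + T * (c * (F + G) + S) := by gcongr
    _ = G + c * (T * G) + 1 * (T * S) + c * (T * F) := by ring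
    _ ≤ G + c * G + (1 + c) * (T * S) + (1 + c) * (T * F) := by
        gcongr _ + c * ?_ + ?_ * _ + ?_ * _
        · exact mul_le_of_le_one_left zero_le hT1
        · exact le_self_add
        · exact le_add_self
    _ = (1 + c) * (G + T * S + T * F) := by ring

end Kfunctional

/-- `K(f,t;L^p,M^{1,p}) ≈ K(f,t;L^p,Ṁ^{1,p}) + min{1,t}‖f‖_{L^p}`, with a
constant depending only on `p` and the doubling constant. -/
theorem Kfunctional_hom_inhom (p : ℝ) (hp : 0 < p) (cD : ℝ≥0∞) :
    ∃ C : ℝ, 1 ≤ C ∧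
      ∀ (X : Type*) [MetricSpace X] [MeasurableSpace X] [BorelSpace X] (μ : Measure X),
        IsDoubling μ cD → BallsPosFin μ →
        ∀ f : X → ℝ, Measurable f →
          (∃ g h : X → ℝ, f = g + h ∧ Measurable g ∧ Measurable h ∧
            LpS μ p Set.univ g ≠ ⊤ ∧ LpS μ p Set.univ h ≠ ⊤ ∧ hajlaszSemi μ p h ≠ ⊤) →
        ∀ t : ℝ, 0 < t →
          Khom μ p f t + ENNReal.ofReal (min 1 t) * LpS μ p Set.univ f
            ≤ ENNReal.ofReal C * Kinhom μ p f t ∧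
          Kinhom μ p f t ≤ ENNReal.ofReal C *
            (Khom μ p f t + ENNReal.ofReal (min 1 t) * LpS μ p Set.univ f) := by
  set c := ENNReal.LpAddConst (ENNReal.ofReal p)
  refine ⟨1 + c.toReal, le_add_of_nonneg_right ENNReal.toReal_nonneg, ?_⟩
  intro X _ _ _ μ _ _ f hf _ t _
  have hC : ENNReal.ofReal (1 + c.toReal) = 1 + c := by
    rw [ENNReal.ofReal_add zero_le_one ENNReal.toReal_nonneg, ENNReal.ofReal_one,
      ENNReal.ofReal_toReal (ENNReal.LpAddConst_lt_top _).ne]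
  rw [hC]
  constructor
  · calc Khom μ p f t + ENNReal.ofReal (min 1 t) * LpS μ p univ f
        ≤ Kinhom μ p f t + c * Kinhom μ p f t :=
          add_le_add Khom_le_Kinhom (min_one_mul_LpS_le_Kinhom hp)
      _ = (1 + c) * Kinhom μ p f t := by ring
  · rcases le_total t 1 with ht1 | h1t
    · simpa only [min_eq_right ht1] using Kinhom_le_of_le_one hp hf ht1
    · calc Kinhom μ p f t ≤ LpS μ p univ f := Kinhom_le_LpS hp hf
        _ ≤ Khom μ p f t + ENNReal.ofReal (min 1 t) * LpS μ p univ f := by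
          rw [min_eq_left h1t, ENNReal.ofReal_one, one_mul]
          exact le_add_self
        _ ≤ (1 + c) * _ := le_mul_of_one_le_left zero_le le_self_add

end
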